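/- arXiv:1707.05029 — 2 statements merged into one kernel-verified Lean document; each statement's English description precedes it below -/
import Mathlib

section
/- A Hermitian 2×2 matrix H = [[a, b],[b̄, d]] over the Cayley numbers (a, d real, b an octonion) is positive definite (meaning 𝒯(H, g·ḡᵗ) > 0 for all nonzero g ∈ 𝒞²) if and only if a > 0 and det H = ad − N(b) > 0. -/
open scoped BigOperators

/-- The Cayley numbers (octonions) as coordinate vectors w.r.t. the basis `e₀,…,e₇`. -/
abbrev Octo := Fin 8 → ℝ

/-- Sign table of the octonion multiplication: `eᵢeⱼ = octSign i j • e_{octIdx i j}`. -/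
def octSign : Matrix (Fin 8) (Fin 8) ℝ :=
  !![1, 1, 1, 1, 1, 1, 1, 1; 1, -1, 1, 1, -1, 1, -1, -1; 1, -1, -1, 1, 1, -1, 1, -1;
     1, -1, -1, -1, 1, 1, -1, 1; 1, 1, -1, -1, -1, 1, 1, -1; 1, -1, 1, -1, -1, -1, 1, 1;
     1, 1, -1, 1, -1, -1, -1, 1; 1, 1, 1, -1, 1, -1, -1, -1]

/-- Index table of the octonion multiplication. -/
def octIdx : Matrix (Fin 8) (Fin 8) (Fin 8) :=
  !![0, 1, 2, 3, 4, 5, 6, 7; 1, 0, 4, 7, 2, 6, 5, 3; 2, 4, 0, 5, 1, 3, 7, 6;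
     3, 7, 5, 0, 6, 2, 4, 1; 4, 2, 1, 6, 0, 7, 3, 5; 5, 6, 3, 2, 7, 0, 1, 4;
     6, 5, 7, 4, 3, 1, 0, 2; 7, 3, 6, 1, 5, 4, 2, 0]

/-- Octonion multiplication, given by the structure constants encoded in
`octSign` and `octIdx` (satisfying `e₁e₂e₄ = … = -e₀`). -/
def octMul (x y : Octo) : Octo := fun k =>
  ∑ i : Fin 8, ∑ j : Fin 8, x i * y j * octSign i j * (if octIdx i j = k then 1 else 0)

/-- The basis vectors `e₀,…,e₇`. -/
def octE (i : Fin 8) : Octo := fun j => if j = i then 1 else 0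

/-- The real part `Re(x) = x₀`. -/
def octRe (x : Octo) : ℝ := x 0

/-- The involution `x ↦ x̄ = 2 Re(x) e₀ - x`. -/
def octConj (x : Octo) : Octo := (2 * octRe x) • octE 0 - x

/-- The norm `N(x) = Σⱼ xⱼ²`. -/
def octN (x : Octo) : ℝ := ∑ j : Fin 8, (x j) ^ 2

/-- The Hermitian matrix `[[a,b],[b̄,d]]` as a `2×2` octonion matrix. -/
noncomputable def herMat (a d : ℝ) (b : Octo) : Matrix (Fin 2) (Fin 2) Octo :=
  !![a • octE 0, b; octConj b, d • octE 0]

/-- The matrix `g·ḡᵗ` for `g ∈ 𝒞²`. -/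
def outerMat (g : Fin 2 → Octo) : Matrix (Fin 2) (Fin 2) Octo :=
  Matrix.of fun i j => octMul (g i) (octConj (g j))

/-- The trace form `𝒯(A,B) = ½ trace(AB̄ᵗ + BĀᵗ)` (a real number, read off as the
`e₀`-coordinate). -/
noncomputable def traceForm (A B : Matrix (Fin 2) (Fin 2) Octo) : ℝ :=
  (1 / 2) * ∑ i : Fin 2, ∑ j : Fin 2,
    ((octMul (A i j) (octConj (B i j))) 0 + (octMul (B i j) (octConj (A i j))) 0)

section helpers
variable {α : Type*} (a0 a1 a2 a3 a4 a5 a6 a7 : α)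
lemma v8_0 : ![a0,a1,a2,a3,a4,a5,a6,a7] (0:Fin 8) = a0 := rfl
lemma v8_1 : ![a0,a1,a2,a3,a4,a5,a6,a7] (1:Fin 8) = a1 := rfl
lemma v8_2 : ![a0,a1,a2,a3,a4,a5,a6,a7] (2:Fin 8) = a2 := rfl
lemma v8_3 : ![a0,a1,a2,a3,a4,a5,a6,a7] (3:Fin 8) = a3 := rfl
lemma v8_4 : ![a0,a1,a2,a3,a4,a5,a6,a7] (4:Fin 8) = a4 := rfl
lemma v8_5 : ![a0,a1,a2,a3,a4,a5,a6,a7] (5:Fin 8) = a5 := rfl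
lemma v8_6 : ![a0,a1,a2,a3,a4,a5,a6,a7] (6:Fin 8) = a6 := rfl
lemma v8_7 : ![a0,a1,a2,a3,a4,a5,a6,a7] (7:Fin 8) = a7 := rfl
end helpers

lemma octN_nonneg (x : Octo) : 0 ≤ octN x :=
  Finset.sum_nonneg fun j _ => sq_nonneg _

lemma octN_pos (x : Octo) (hx : x ≠ 0) : 0 < octN x := by
  obtain ⟨k, hk⟩ : ∃ k, x k ≠ 0 := by
    by_contra h
    push_neg at h
    exact hx (funext fun k => h k)
  have : 0 < (x k) ^ 2 := by positivity
  calc (0:ℝ) < (x k)^2 := this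
    _ ≤ octN x := Finset.single_le_sum (fun j _ => sq_nonneg (x j)) (Finset.mem_univ k)

lemma octN_eq_zero (x : Octo) (hx : octN x = 0) : x = 0 := by
  by_contra h
  exact absurd hx (ne_of_gt (octN_pos x h))

lemma octMul_e0 (b : Octo) : octMul b (octE 0) = b := by
  funext k
  have hk : k = 0 ∨ k = 1 ∨ k = 2 ∨ k = 3 ∨ k = 4 ∨ k = 5 ∨ k = 6 ∨ k = 7 := by
    revert k; decide
  rcases hk with rfl|rfl|rfl|rfl|rfl|rfl|rfl|rfl <;>
  · simp only [octMul, octE, octSign, octIdx, Fin.sum_univ_eight, Matrix.of_apply,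
      v8_0, v8_1, v8_2, v8_3, v8_4, v8_5, v8_6, v8_7, Fin.reduceEq, reduceIte,
      if_true, if_false, mul_one, mul_zero, mul_neg, add_zero, zero_add, one_mul, neg_neg]
    ring

lemma octMul_zero_right (b : Octo) : octMul b 0 = 0 := by
  funext k
  simp [octMul]

lemma octE0_ne_zero : octE 0 ≠ (0 : Octo) := by
  intro h
  have := congrFun h 0
  simp [octE] at this

lemma octN_e0 : octN (octE 0) = 1 := by
  simp [octN, octE, Fin.sum_univ_eight]

set_option maxHeartbeats 4000000 in
lemma octN_mul (b y : Octo) : octN (octMul b y) = octN b * octN y := by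
  simp only [octN, octMul, octSign, octIdx, Fin.sum_univ_eight, Matrix.of_apply,
    v8_0, v8_1, v8_2, v8_3, v8_4, v8_5, v8_6, v8_7, Fin.reduceEq, if_true, if_false,
    reduceIte, mul_one, mul_zero, mul_neg, add_zero, zero_add, one_mul, neg_neg]
  ring

set_option maxHeartbeats 8000000 in
lemma entry_diag (c : ℝ) (x : Octo) :
    (octMul (c • octE 0) (octConj (octMul x (octConj x)))) 0
      + (octMul (octMul x (octConj x)) (octConj (c • octE 0))) 0 = 2 * c * octN x := by
  simp only [octConj, octRe, octE, octN, octMul, Fin.sum_univ_eight,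
    Matrix.of_apply, Pi.add_apply, Pi.sub_apply, Pi.smul_apply, smul_eq_mul,
    octSign, octIdx, v8_0, v8_1, v8_2, v8_3, v8_4, v8_5, v8_6, v8_7, Fin.reduceEq,
    reduceIte, if_true, if_false, mul_one, mul_zero, mul_neg, neg_neg, add_zero, zero_add,
    one_mul, sub_zero, zero_sub, neg_zero]
  ring

set_option maxHeartbeats 8000000 in
lemma entry_01 (b x y : Octo) :
    (octMul b (octConj (octMul x (octConj y)))) 0
      + (octMul (octMul x (octConj y)) (octConj b)) 0
      = 2 * ∑ k : Fin 8, x k * (octMul b y) k := by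
  simp only [octConj, octRe, octE, octN, octMul, Fin.sum_univ_eight,
    Matrix.of_apply, Pi.add_apply, Pi.sub_apply, Pi.smul_apply, smul_eq_mul,
    octSign, octIdx, v8_0, v8_1, v8_2, v8_3, v8_4, v8_5, v8_6, v8_7, Fin.reduceEq,
    reduceIte, if_true, if_false, mul_one, mul_zero, mul_neg, neg_neg, add_zero, zero_add,
    one_mul, sub_zero, zero_sub, neg_zero]
  ring

set_option maxHeartbeats 8000000 in
lemma entry_10 (b x y : Octo) :
    (octMul (octConj b) (octConj (octMul y (octConj x)))) 0
      + (octMul (octMul y (octConj x)) (octConj (octConj b))) 0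
      = 2 * ∑ k : Fin 8, x k * (octMul b y) k := by
  simp only [octConj, octRe, octE, octN, octMul, Fin.sum_univ_eight,
    Matrix.of_apply, Pi.add_apply, Pi.sub_apply, Pi.smul_apply, smul_eq_mul,
    octSign, octIdx, v8_0, v8_1, v8_2, v8_3, v8_4, v8_5, v8_6, v8_7, Fin.reduceEq,
    reduceIte, if_true, if_false, mul_one, mul_zero, mul_neg, neg_neg, add_zero, zero_add,
    one_mul, sub_zero, zero_sub, neg_zero]
  ring

lemma traceForm_eval (a d : ℝ) (b : Octo) (g : Fin 2 → Octo) :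
    traceForm (herMat a d b) (outerMat g) =
      a * octN (g 0) + d * octN (g 1) + 2 * ∑ k : Fin 8, (g 0) k * (octMul b (g 1)) k := by
  have e00 := entry_diag a (g 0)
  have e11 := entry_diag d (g 1)
  have e01 := entry_01 b (g 0) (g 1)
  have e10 := entry_10 b (g 0) (g 1)
  simp only [traceForm, herMat, outerMat, Fin.sum_univ_two, Matrix.of_apply,
    Matrix.cons_val', Matrix.cons_val_zero, Matrix.cons_val_one, Matrix.head_cons,
    Matrix.head_fin_const, Matrix.empty_val', Matrix.cons_val_fin_one]
  rw [e00, e11, e01, e10]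
  ring

lemma octN_expand (a : ℝ) (x z : Octo) :
    octN (a • x + z) = a ^ 2 * octN x + 2 * a * (∑ k : Fin 8, x k * z k) + octN z := by
  simp only [octN, Fin.sum_univ_eight, Pi.add_apply, Pi.smul_apply, smul_eq_mul]
  ring

lemma key_identity (a d : ℝ) (b : Octo) (g : Fin 2 → Octo) :
    a * traceForm (herMat a d b) (outerMat g) =
      octN (a • g 0 + octMul b (g 1)) + (a * d - octN b) * octN (g 1) := by
  rw [traceForm_eval, octN_expand, octN_mul]
  ring

lemma eval_e0 (a d : ℝ) (b : Octo) :
    traceForm (herMat a d b) (outerMat ![octE 0, 0]) = a := by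
  rw [traceForm_eval]
  have h0 : (![octE 0, 0] : Fin 2 → Octo) 1 = 0 := rfl
  have h1 : (![octE 0, 0] : Fin 2 → Octo) 0 = octE 0 := rfl
  rw [h0, h1, octMul_zero_right, octN_e0]
  have : octN (0 : Octo) = 0 := by simp [octN]
  rw [this]
  simp

/-- `H = [[a,b],[b̄,d]]` is positive definite (`𝒯(H, gḡᵗ) > 0` for all `g ≠ 0`) iff
`a > 0` and `det H = ad - N(b) > 0`. -/
theorem herMat_posDef_iff (a d : ℝ) (b : Octo) :
    (∀ g : Fin 2 → Octo, g ≠ 0 → 0 < traceForm (herMat a d b) (outerMat g)) ↔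
      (0 < a ∧ 0 < a * d - octN b) := by
  constructor
  · intro h
    have hg0 : (![octE 0, 0] : Fin 2 → Octo) ≠ 0 := by
      intro hc
      exact octE0_ne_zero (congrFun hc 0)
    have ha : 0 < a := by
      have := h ![octE 0, 0] hg0
      rwa [eval_e0] at this
    refine ⟨ha, ?_⟩
    set g : Fin 2 → Octo := ![(-(a⁻¹)) • b, octE 0] with hgdef
    have hgne : g ≠ 0 := by
      intro hc
      exact octE0_ne_zero (congrFun hc 1)
    have hQ := h g hgne
    have hkey := key_identity a d b g
    have hg1 : g 1 = octE 0 := rfl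
    have hg0' : g 0 = (-(a⁻¹)) • b := rfl
    rw [hg0', hg1, octMul_e0, octN_e0] at hkey
    have hz : a • ((-(a⁻¹)) • b) + b = 0 := by
      rw [smul_smul]
      rw [mul_neg, mul_inv_cancel₀ (ne_of_gt ha)]
      funext k; simp
    rw [hz] at hkey
    have h0 : octN (0 : Octo) = 0 := by simp [octN]
    rw [h0] at hkey
    have : a * traceForm (herMat a d b) (outerMat g) > 0 := mul_pos ha hQ
    linarith [hkey]
  · rintro ⟨ha, hdet⟩ g hg
    have hkey := key_identity a d b g
    by_cases h1 : g 1 = 0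
    · have h0 : g 0 ≠ 0 := by
        intro hc
        apply hg
        funext i
        fin_cases i
        · exact hc
        · exact h1
      rw [h1, octMul_zero_right] at hkey
      have hN : octN (a • g 0 + 0) = a ^ 2 * octN (g 0) := by
        simp [octN, Fin.sum_univ_eight, Pi.smul_apply, smul_eq_mul]
        ring
      rw [hN] at hkey
      have h0' : octN (0 : Octo) = 0 := by simp [octN]
      rw [h0'] at hkey
      have hpos := octN_pos (g 0) h0
      nlinarith [mul_pos (mul_pos ha ha) hpos, mul_pos ha hpos]
    · have hpos := octN_pos (g 1) h1
      have hn1 := octN_nonneg (a • g 0 + octMul b (g 1))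
      nlinarith [mul_pos hdet hpos]
end

section
/- For Z = [[ω, z],[z̄, τ]] in the octonionic half-plane ℍ₂(𝒞), det Z = ωτ − N(z) ≠ 0 (the positivity condition ω_i τ_i − N(z_i) > 0 together with ω_i, τ_i > 0 forces det Z to be nonzero), so that the map Z ↦ −Z⁻¹ := (−1/det Z)·[[τ, −z],[−z̄, ω]] is well defined on ℍ₂(𝒞) and maps ℍ₂(𝒞) to itself. -/
open scoped BigOperators

/-- The complexified Cayley numbers `𝒞_ℂ = 𝒞 ⊗ ℂ`, as coordinate vectors. -/
abbrev OctoC := Fin 8 → ℂ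

/-- The embedding `𝒞 → 𝒞_ℂ`. -/
def toC (x : Octo) : OctoC := fun j => (x j : ℂ)

/-- Multiplication on `𝒞_ℂ`, extending the octonion multiplication `ℂ`-bilinearly. -/
noncomputable def octMulC (x y : OctoC) : OctoC := fun k =>
  ∑ i : Fin 8, ∑ j : Fin 8, x i * y j * (octSign i j : ℂ) * (if octIdx i j = k then 1 else 0)

/-- Conjugation on `𝒞_ℂ`, extending the octonion involution `ℂ`-linearly. -/
def octConjC (x : OctoC) : OctoC := fun k => if k = 0 then x 0 else -x k

/-- The `ℂ`-bilinear extension of the norm form: `N(z) = Σⱼ zⱼ²`. -/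
noncomputable def octNC (z : OctoC) : ℂ := ∑ j : Fin 8, (z j) ^ 2

/-- The octonionic half-plane `ℍ₂(𝒞)`, in the coordinates `Z = [[ω, z],[z̄, τ]]`:
`Z = X + iY` with `X, Y ∈ Her(2,𝒞)` and `Y > 0`, i.e. `Im ω > 0`, `Im τ > 0` and
`Im ω · Im τ − N(Im z) > 0`. -/
noncomputable def H2 : Set (ℂ × OctoC × ℂ) :=
  {p | 0 < p.1.im ∧ 0 < p.2.2.im ∧ octN (fun j => (p.2.1 j).im) < p.1.im * p.2.2.im}

/-- `det Z = ωτ − N(z)` for `Z = [[ω,z],[z̄,τ]]`, with `N` extended `ℂ`-bilinearly. -/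
noncomputable def detP (p : ℂ × OctoC × ℂ) : ℂ := p.1 * p.2.2 - ∑ j : Fin 8, (p.2.1 j) ^ 2

/-- The map `Z ↦ −Z⁻¹ = (−1/det Z)·[[τ, −z],[−z̄, ω]]` in the coordinates `(ω, z, τ)`. -/
noncomputable def negInv (p : ℂ × OctoC × ℂ) : ℂ × OctoC × ℂ :=
  (-p.2.2 / detP p, (detP p)⁻¹ • p.2.1, -p.1 / detP p)

private lemma sum_expand (f g : Fin 8 → ℝ) (u v : ℝ) :
    ∑ j : Fin 8, (u * f j - v * g j) ^ 2 =
      u ^ 2 * (∑ j : Fin 8, f j ^ 2) - 2 * u * v * (∑ j : Fin 8, f j * g j)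
        + v ^ 2 * (∑ j : Fin 8, g j ^ 2) := by
  rw [Finset.mul_sum, Finset.mul_sum, Finset.mul_sum, ← Finset.sum_sub_distrib,
    ← Finset.sum_add_distrib]
  exact Finset.sum_congr rfl fun j _ => by ring

set_option maxHeartbeats 1000000 in
/-- For `Z ∈ ℍ₂(𝒞)` one has `det Z = ωτ − N(z) ≠ 0`, so `Z ↦ −Z⁻¹` is well defined on
`ℍ₂(𝒞)` and maps `ℍ₂(𝒞)` to itself. -/
theorem detP_ne_zero_and_negInv_mem (p : ℂ × OctoC × ℂ) (hp : p ∈ H2) :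
    detP p ≠ 0 ∧ negInv p ∈ H2 := by
  obtain ⟨hb, hd, hy⟩ := hp
  simp only [octN] at hy
  set a := p.1.re with ha
  set b := p.1.im with hbdef
  set c := p.2.2.re with hc
  set d := p.2.2.im with hddef
  set Sx := ∑ j : Fin 8, (p.2.1 j).re ^ 2 with hSx
  set Sy := ∑ j : Fin 8, (p.2.1 j).im ^ 2 with hSy
  set Sxy := ∑ j : Fin 8, (p.2.1 j).re * (p.2.1 j).im with hSxy
  have hsqre : ∀ z : ℂ, (z ^ 2).re = z.re ^ 2 - z.im ^ 2 := fun z => by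
    rw [sq, Complex.mul_re]; ring
  have hsqim : ∀ z : ℂ, (z ^ 2).im = 2 * (z.re * z.im) := fun z => by
    rw [sq, Complex.mul_im]; ring
  have hre : (detP p).re = a * c - b * d - (Sx - Sy) := by
    simp only [detP, Complex.sub_re, Complex.mul_re, Complex.re_sum]
    rw [Finset.sum_congr rfl fun j _ => hsqre (p.2.1 j), Finset.sum_sub_distrib]
  have him : (detP p).im = a * d + b * c - 2 * Sxy := by
    simp only [detP, Complex.sub_im, Complex.mul_im, Complex.im_sum]
    rw [Finset.sum_congr rfl fun j _ => hsqim (p.2.1 j), ← Finset.mul_sum]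
  set Dr := (detP p).re with hDr
  set Di := (detP p).im with hDi
  -- positivity of Sy-defect
  have hQy : 0 < b * d - Sy := by linarith
  -- A = c*Di - d*Dr > 0
  have hsum1 : ∑ j : Fin 8, (d * (p.2.1 j).re - c * (p.2.1 j).im) ^ 2 =
      d ^ 2 * Sx - 2 * d * c * Sxy + c ^ 2 * Sy := sum_expand _ _ _ _
  have hsum1nonneg : 0 ≤ ∑ j : Fin 8, (d * (p.2.1 j).re - c * (p.2.1 j).im) ^ 2 :=
    Finset.sum_nonneg fun j _ => sq_nonneg _
  have hAd : (c * Di - d * Dr) * d =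
      (∑ j : Fin 8, (d * (p.2.1 j).re - c * (p.2.1 j).im) ^ 2)
        + (c ^ 2 + d ^ 2) * (b * d - Sy) := by
    rw [hsum1, hre, him]; ring
  have hA : 0 < c * Di - d * Dr := by
    have h1 : 0 < (c * Di - d * Dr) * d := by
      rw [hAd]
      have := mul_pos (by positivity : (0:ℝ) < c ^ 2 + d ^ 2) hQy
      linarith
    nlinarith [h1, hd]
  -- B = a*Di - b*Dr > 0
  have hsum2 : ∑ j : Fin 8, (b * (p.2.1 j).re - a * (p.2.1 j).im) ^ 2 =
      b ^ 2 * Sx - 2 * b * a * Sxy + a ^ 2 * Sy := sum_expand _ _ _ _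
  have hsum2nonneg : 0 ≤ ∑ j : Fin 8, (b * (p.2.1 j).re - a * (p.2.1 j).im) ^ 2 :=
    Finset.sum_nonneg fun j _ => sq_nonneg _
  have hBb : (a * Di - b * Dr) * b =
      (∑ j : Fin 8, (b * (p.2.1 j).re - a * (p.2.1 j).im) ^ 2)
        + (a ^ 2 + b ^ 2) * (b * d - Sy) := by
    rw [hsum2, hre, him]; ring
  have hB : 0 < a * Di - b * Dr := by
    have h1 : 0 < (a * Di - b * Dr) * b := by
      rw [hBb]
      have := mul_pos (by positivity : (0:ℝ) < a ^ 2 + b ^ 2) hQy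
      linarith
    nlinarith [h1, hb]
  -- |det|^2 > 0
  have hnsq : 0 < Dr ^ 2 + Di ^ 2 := by
    nlinarith [sq_nonneg (c * Dr + d * Di), mul_pos hA hA, sq_nonneg Dr, sq_nonneg Di,
      sq_nonneg c, sq_nonneg d]
  have hne : detP p ≠ 0 := by
    intro h
    rw [h] at hDr hDi
    simp only [Complex.zero_re, Complex.zero_im] at hDr hDi
    rw [hDr, hDi] at hnsq
    norm_num at hnsq
  have hnormsq : Complex.normSq (detP p) = Dr ^ 2 + Di ^ 2 := by
    rw [Complex.normSq_apply, ← hDr, ← hDi]; ring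
  refine ⟨hne, ?_, ?_, ?_⟩
  · -- Im (-τ / det) > 0
    show 0 < (-p.2.2 / detP p).im
    rw [Complex.div_im, hnormsq, Complex.neg_im, Complex.neg_re, ← hDr, ← hDi]
    have : (-d) * Dr / (Dr ^ 2 + Di ^ 2) - (-c) * Di / (Dr ^ 2 + Di ^ 2)
        = (c * Di - d * Dr) / (Dr ^ 2 + Di ^ 2) := by ring
    rw [this]
    exact div_pos hA hnsq
  · show 0 < (-p.1 / detP p).im
    rw [Complex.div_im, hnormsq, Complex.neg_im, Complex.neg_re, ← hDr, ← hDi]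
    have : (-b) * Dr / (Dr ^ 2 + Di ^ 2) - (-a) * Di / (Dr ^ 2 + Di ^ 2)
        = (a * Di - b * Dr) / (Dr ^ 2 + Di ^ 2) := by ring
    rw [this]
    exact div_pos hB hnsq
  · show octN (fun j => (((detP p)⁻¹ • p.2.1) j).im) <
        (-p.2.2 / detP p).im * (-p.1 / detP p).im
    have him1 : (-p.2.2 / detP p).im = (c * Di - d * Dr) / (Dr ^ 2 + Di ^ 2) := by
      rw [Complex.div_im, hnormsq, Complex.neg_im, Complex.neg_re, ← hDr, ← hDi]; ring
    have him2 : (-p.1 / detP p).im = (a * Di - b * Dr) / (Dr ^ 2 + Di ^ 2) := by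
      rw [Complex.div_im, hnormsq, Complex.neg_im, Complex.neg_re, ← hDr, ← hDi]; ring
    have himz : ∀ j : Fin 8, (((detP p)⁻¹ • p.2.1) j).im
        = (Dr * (p.2.1 j).im - Di * (p.2.1 j).re) / (Dr ^ 2 + Di ^ 2) := by
      intro j
      simp only [Pi.smul_apply, smul_eq_mul, Complex.mul_im, Complex.inv_re,
        Complex.inv_im, hnormsq, ← hDr, ← hDi]
      ring
    have hsum3 : ∑ j : Fin 8, (Di * (p.2.1 j).re - Dr * (p.2.1 j).im) ^ 2 =
        Di ^ 2 * Sx - 2 * Di * Dr * Sxy + Dr ^ 2 * Sy := sum_expand _ _ _ _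
    have hoct : octN (fun j => (((detP p)⁻¹ • p.2.1) j).im)
        = (Di ^ 2 * Sx - 2 * Di * Dr * Sxy + Dr ^ 2 * Sy) / (Dr ^ 2 + Di ^ 2) ^ 2 := by
      simp only [octN, himz]
      rw [← hsum3, Finset.sum_div]
      exact Finset.sum_congr rfl fun j _ => by rw [div_pow]; congr 1; ring
    have key : (c * Di - d * Dr) * (a * Di - b * Dr)
        - (Di ^ 2 * Sx - 2 * Di * Dr * Sxy + Dr ^ 2 * Sy)
        = (Dr ^ 2 + Di ^ 2) * (b * d - Sy) := by
      rw [hre, him]; ring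
    have hnum : Di ^ 2 * Sx - 2 * Di * Dr * Sxy + Dr ^ 2 * Sy
        < (c * Di - d * Dr) * (a * Di - b * Dr) := by
      nlinarith [key, mul_pos hnsq hQy]
    rw [hoct, him1, him2, div_mul_div_comm, ← sq]
    exact div_lt_div_of_pos_right hnum (by positivity)
end
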